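/- There exist abelian surfaces that can be written as a product of two elliptic curves in two genuinely distinct ways, i.e., there exist elliptic curves E₁, E₂, F₁, F₂ with E₁ × E₂ ≅ F₁ × F₂ but {E₁, E₂} ≇ {F₁, F₂} as unordered pairs. -/

import Mathlib

/-- A complex lattice: the subgroup of `ℂ` generated by two `ℝ`-linearly independent periods.
An elliptic curve is `ℂ / Λ` for such a lattice `Λ`. -/
def IsComplexLattice (L : AddSubgroup ℂ) : Prop :=
  ∃ ω₁ ω₂ : ℂ, LinearIndependent ℝ ![ω₁, ω₂] ∧ L = AddSubgroup.closure {ω₁, ω₂}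

/-- The elliptic curves `ℂ/L₁` and `ℂ/L₂` are isomorphic iff the lattices are homothetic. -/
def EllIso (L₁ L₂ : AddSubgroup ℂ) : Prop :=
  ∃ α : ℂ, α ≠ 0 ∧ (fun z => α * z) '' (L₁ : Set ℂ) = (L₂ : Set ℂ)

/-- The abelian surfaces `ℂ²/(L₁ × L₂)` and `ℂ²/(L₃ × L₄)` are isomorphic iff a `ℂ`-linear
automorphism of `ℂ²` carries one product lattice to the other. -/
def ProdIso (L₁ L₂ L₃ L₄ : AddSubgroup ℂ) : Prop :=
  ∃ M : (ℂ × ℂ) ≃ₗ[ℂ] ℂ × ℂ, M '' ((L₁ : Set ℂ) ×ˢ (L₂ : Set ℂ)) = (L₃ : Set ℂ) ×ˢ (L₄ : Set ℂ)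

/-!
Let `𝒪 = ℤ[√-5]` and `𝔭 = (2, 1 + √-5)`. The matrix `M = [[2, 1 + √-5], [√-5 - 1, -2]]`
satisfies `M² = -2`; it maps `𝒪²` into `𝔭²` because `𝔭` is an ideal, and `𝔭²` into `2𝒪²`
because `𝔭𝔭 = 2𝒪`, so `M` carries `𝒪 × 𝒪` onto `𝔭 × 𝔭`. On the other hand `𝔭` is not
homothetic to `𝒪`: if `α𝒪 = 𝔭`, then `|α|²` is an integer dividing both `|2|² = 4` and
`|1 + √-5|² = 6`, whereas `|x|² ≥ 4` for every nonzero `x ∈ 𝔭`.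
-/

open Complex

theorem AddSubgroup.mul_mem_of_mem_closure {R : Type*} [NonUnitalNonAssocRing R]
    {S T : Set R} {M : AddSubgroup R} (h : ∀ s ∈ S, ∀ t ∈ T, s * t ∈ M) {x y : R}
    (hx : x ∈ AddSubgroup.closure S) (hy : y ∈ AddSubgroup.closure T) : x * y ∈ M := by
  have hS : ∀ s ∈ S, AddSubgroup.closure T ≤ M.comap (AddMonoidHom.mulLeft s) := fun s hs =>
    (AddSubgroup.closure_le _).2 fun t ht => h s hs t ht
  have hT : AddSubgroup.closure S ≤ M.comap (AddMonoidHom.mulRight y) :=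
    (AddSubgroup.closure_le _).2 fun s hs => hS s hs hy
  exact hT hx

theorem Complex.linearIndependent_pair_of_im_conj_mul_ne_zero {z w : ℂ}
    (h : (starRingEnd ℂ z * w).im ≠ 0) : LinearIndependent ℝ ![z, w] := by
  rw [linearIndependent_fin2]
  simp only [Matrix.cons_val_one, Matrix.cons_val_zero]
  refine ⟨fun hw => h (by simp [hw]), fun a ha => h ?_⟩
  simp [← ha]
  ring

noncomputable def sqrtNegFive : ℂ := Real.sqrt 5 * I

local notation "θ" => sqrtNegFive

theorem sqrtNegFive_mul_self : θ * θ = -5 := by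
  rw [sqrtNegFive, mul_mul_mul_comm, ← ofReal_mul, Real.mul_self_sqrt (by norm_num), I_mul_I]
  norm_num

theorem normSq_intCast_add_intCast_mul_sqrtNegFive (a b : ℤ) :
    normSq (a + b * θ) = a ^ 2 + 5 * b ^ 2 := by
  have h5 : Real.sqrt 5 ^ 2 = 5 := Real.sq_sqrt (by norm_num)
  simp [normSq_apply, sqrtNegFive]
  linear_combination b ^ 2 * h5

noncomputable def zSqrtNegFive : AddSubgroup ℂ := AddSubgroup.closure {1, θ}

noncomputable def primeOverTwo : AddSubgroup ℂ := AddSubgroup.closure {2, 1 + θ}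

local notation "𝒪" => zSqrtNegFive
local notation "𝔭" => primeOverTwo

theorem mem_zSqrtNegFive {x : ℂ} : x ∈ 𝒪 ↔ ∃ a b : ℤ, a + b * θ = x := by
  simp [zSqrtNegFive, AddSubgroup.mem_closure_pair, zsmul_eq_mul]

theorem mem_primeOverTwo {x : ℂ} : x ∈ 𝔭 ↔ ∃ m n : ℤ, m * 2 + n * (1 + θ) = x := by
  simp only [primeOverTwo, AddSubgroup.mem_closure_pair, zsmul_eq_mul]

theorem isComplexLattice_zSqrtNegFive : IsComplexLattice 𝒪 :=
  ⟨1, θ, linearIndependent_pair_of_im_conj_mul_ne_zero (by simp [sqrtNegFive]), rfl⟩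

theorem isComplexLattice_primeOverTwo : IsComplexLattice 𝔭 :=
  ⟨2, 1 + θ, linearIndependent_pair_of_im_conj_mul_ne_zero (by simp [sqrtNegFive]), rfl⟩

theorem two_mem_primeOverTwo : 2 ∈ 𝔭 := AddSubgroup.subset_closure (by simp)

theorem one_add_sqrtNegFive_mem_primeOverTwo : 1 + θ ∈ 𝔭 := AddSubgroup.subset_closure (by simp)

theorem sqrtNegFive_sub_one_mem_primeOverTwo : θ - 1 ∈ 𝔭 :=
  mem_primeOverTwo.2 ⟨-1, 1, by ring⟩

theorem mul_mem_primeOverTwo {x y : ℂ} (hx : x ∈ 𝔭) (hy : y ∈ 𝒪) : x * y ∈ 𝔭 := by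
  refine AddSubgroup.mul_mem_of_mem_closure ?_ hx hy
  simp only [Set.mem_insert_iff, Set.mem_singleton_iff, mem_primeOverTwo]
  rintro s (rfl | rfl) t (rfl | rfl)
  · exact ⟨1, 0, by ring⟩
  · exact ⟨-1, 2, by ring⟩
  · exact ⟨0, 1, by ring⟩
  · exact ⟨-3, 1, by linear_combination -sqrtNegFive_mul_self⟩

theorem mul_div_two_mem_zSqrtNegFive {x y : ℂ} (hx : x ∈ 𝔭) (hy : y ∈ 𝔭) : x * y / 2 ∈ 𝒪 := by
  refine AddSubgroup.mul_mem_of_mem_closure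
    (M := AddSubgroup.comap (AddMonoidHom.mulRight 2⁻¹) 𝒪) ?_ hx hy
  simp only [Set.mem_insert_iff, Set.mem_singleton_iff, AddSubgroup.mem_comap,
    AddMonoidHom.coe_mulRight, mem_zSqrtNegFive]
  rintro s (rfl | rfl) t (rfl | rfl)
  · exact ⟨2, 0, by ring⟩
  · exact ⟨1, 1, by ring⟩
  · exact ⟨1, 1, by ring⟩
  · exact ⟨-2, 1, by linear_combination -sqrtNegFive_mul_self / 2⟩

theorem primeOverTwo_le_zSqrtNegFive : 𝔭 ≤ 𝒪 := by
  refine (AddSubgroup.closure_le _).2 ?_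
  simp only [Set.insert_subset_iff, Set.singleton_subset_iff, SetLike.mem_coe, mem_zSqrtNegFive]
  exact ⟨⟨2, 0, by simp⟩, ⟨1, 1, by simp⟩⟩

theorem exists_normSq_eq_intCast_of_mem_zSqrtNegFive {x : ℂ} (hx : x ∈ 𝒪) :
    ∃ N : ℤ, normSq x = N := by
  obtain ⟨a, b, rfl⟩ := mem_zSqrtNegFive.1 hx
  exact ⟨a ^ 2 + 5 * b ^ 2, by push_cast; exact normSq_intCast_add_intCast_mul_sqrtNegFive a b⟩

theorem four_le_normSq_of_mem_primeOverTwo {x : ℂ} (hx : x ∈ 𝔭) (hx0 : x ≠ 0) :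
    4 ≤ normSq x := by
  obtain ⟨m, n, rfl⟩ := mem_primeOverTwo.1 hx
  have hmn : ¬(m = 0 ∧ n = 0) := by rintro ⟨rfl, rfl⟩; simp at hx0
  have hnorm : (4 : ℤ) ≤ (2 * m + n) ^ 2 + 5 * n ^ 2 := by
    rcases eq_or_ne n 0 with rfl | hn
    · have := sq_pos_of_ne_zero (a := m) (by tauto)
      linarith
    · have := sq_pos_of_ne_zero hn
      nlinarith [sq_nonneg (2 * m + n)]
  have hcoord : (m * 2 + n * (1 + θ) : ℂ) = ((2 * m + n : ℤ) : ℂ) + (n : ℂ) * θ := by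
    push_cast; ring
  rw [hcoord, normSq_intCast_add_intCast_mul_sqrtNegFive]
  exact_mod_cast hnorm

theorem not_ellIso_zSqrtNegFive_primeOverTwo : ¬ EllIso 𝒪 𝔭 := by
  rintro ⟨α, hα0, hα⟩
  have hmem : ∀ x, x ∈ 𝔭 ↔ ∃ z ∈ 𝒪, α * z = x := fun x => by
    rw [← SetLike.mem_coe, ← hα]
    rfl
  have hα𝔭 : α ∈ 𝔭 := (hmem α).2 ⟨1, AddSubgroup.subset_closure (by simp), mul_one α⟩
  obtain ⟨z, hz, hαz⟩ := (hmem 2).1 two_mem_primeOverTwo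
  obtain ⟨w, hw, hαw⟩ := (hmem (1 + θ)).1 one_add_sqrtNegFive_mem_primeOverTwo
  obtain ⟨A, hA⟩ :=
    exists_normSq_eq_intCast_of_mem_zSqrtNegFive (primeOverTwo_le_zSqrtNegFive hα𝔭)
  obtain ⟨B, hB⟩ := exists_normSq_eq_intCast_of_mem_zSqrtNegFive hz
  obtain ⟨C, hC⟩ := exists_normSq_eq_intCast_of_mem_zSqrtNegFive hw
  have hAB : A * B = 4 := by
    have := congrArg normSq hαz
    rw [normSq_mul, hA, hB, show normSq 2 = 4 by norm_num [normSq_apply]] at this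
    exact_mod_cast this
  have hAC : A * C = 6 := by
    have := congrArg normSq hαw
    have h6 : normSq (1 + θ) = 6 := by
      have := normSq_intCast_add_intCast_mul_sqrtNegFive 1 1
      norm_num at this
      exact this
    rw [normSq_mul, hA, hC, h6] at this
    exact_mod_cast this
  have hA2 : A ∣ 2 := by simpa using dvd_sub (Dvd.intro C hAC) (Dvd.intro B hAB)
  have hA4 : (4 : ℝ) ≤ A := hA ▸ four_le_normSq_of_mem_primeOverTwo hα𝔭 hα0
  have : (A : ℝ) ≤ 2 := by exact_mod_cast Int.le_of_dvd two_pos hA2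
  linarith

noncomputable def splittingMap : (ℂ × ℂ) →ₗ[ℂ] ℂ × ℂ where
  toFun v := (2 * v.1 + (1 + θ) * v.2, (θ - 1) * v.1 - 2 * v.2)
  map_add' v w := by ext <;> simp <;> ring
  map_smul' c v := by ext <;> simp <;> ring

theorem splittingMap_apply (v : ℂ × ℂ) :
    splittingMap v = (2 * v.1 + (1 + θ) * v.2, (θ - 1) * v.1 - 2 * v.2) := rfl

theorem splittingMap_splittingMap (v : ℂ × ℂ) :
    splittingMap (splittingMap v) = (-2 : ℂ) • v := by
  ext <;> simp only [splittingMap_apply, Prod.smul_fst, Prod.smul_snd, smul_eq_mul]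
  · linear_combination v.1 * sqrtNegFive_mul_self
  · linear_combination v.2 * sqrtNegFive_mul_self

theorem splittingMap_mem_primeOverTwo_prod {v : ℂ × ℂ}
    (hv : v ∈ (𝒪 : Set ℂ) ×ˢ (𝒪 : Set ℂ)) : splittingMap v ∈ (𝔭 : Set ℂ) ×ˢ (𝔭 : Set ℂ) :=
  ⟨add_mem (mul_mem_primeOverTwo two_mem_primeOverTwo hv.1)
      (mul_mem_primeOverTwo one_add_sqrtNegFive_mem_primeOverTwo hv.2),
    sub_mem (mul_mem_primeOverTwo sqrtNegFive_sub_one_mem_primeOverTwo hv.1)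
      (mul_mem_primeOverTwo two_mem_primeOverTwo hv.2)⟩

theorem neg_half_smul_splittingMap_mem_zSqrtNegFive_prod {v : ℂ × ℂ}
    (hv : v ∈ (𝔭 : Set ℂ) ×ˢ (𝔭 : Set ℂ)) :
    (-2⁻¹ : ℂ) • splittingMap v ∈ (𝒪 : Set ℂ) ×ˢ (𝒪 : Set ℂ) := by
  have h2 := two_mem_primeOverTwo
  have hsum : ∀ a ∈ 𝔭, ∀ b ∈ 𝔭, ∀ c ∈ 𝔭, ∀ d ∈ 𝔭, -2⁻¹ * (a * b + c * d) ∈ 𝒪 :=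
    fun a ha b hb c hc d hd => by
      convert neg_mem (add_mem (mul_div_two_mem_zSqrtNegFive ha hb)
        (mul_div_two_mem_zSqrtNegFive hc hd)) using 1
      ring
  simp only [Set.mem_prod, SetLike.mem_coe, Prod.smul_fst, Prod.smul_snd, smul_eq_mul,
    splittingMap_apply, sub_eq_add_neg, neg_mul_eq_neg_mul 2 v.2] at hv ⊢
  exact ⟨hsum 2 h2 v.1 hv.1 (1 + θ) one_add_sqrtNegFive_mem_primeOverTwo v.2 hv.2,
    hsum _ sqrtNegFive_sub_one_mem_primeOverTwo v.1 hv.1 (-2) (neg_mem h2) v.2 hv.2⟩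

noncomputable def splittingEquiv : (ℂ × ℂ) ≃ₗ[ℂ] ℂ × ℂ :=
  .ofLinearMap splittingMap ((-2⁻¹ : ℂ) • splittingMap)
    (LinearMap.ext fun v => by simp [splittingMap_splittingMap, smul_smul])
    (LinearMap.ext fun v => by simp [splittingMap_splittingMap, smul_smul])

theorem prodIso_zSqrtNegFive_primeOverTwo : ProdIso 𝒪 𝒪 𝔭 𝔭 :=
  ⟨splittingEquiv,
    (Set.image_subset_iff.2 fun _ hv => splittingMap_mem_primeOverTwo_prod hv).antisymm
      fun v hv => ⟨splittingEquiv.symm v, neg_half_smul_splittingMap_mem_zSqrtNegFive_prod hv,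
        splittingEquiv.apply_symm_apply v⟩⟩

/-- There exist abelian surfaces which can be written as a product of two elliptic curves in
two genuinely distinct ways: elliptic curves `E₁ = ℂ/L₁`, `E₂ = ℂ/L₂`, `F₁ = ℂ/L₃`,
`F₂ = ℂ/L₄` with `E₁ × E₂ ≅ F₁ × F₂` but `{E₁, E₂} ≇ {F₁, F₂}` as unordered pairs. -/
theorem exists_abelian_surface_two_splittings :
    ∃ L₁ L₂ L₃ L₄ : AddSubgroup ℂ,
      IsComplexLattice L₁ ∧ IsComplexLattice L₂ ∧ IsComplexLattice L₃ ∧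
      IsComplexLattice L₄ ∧ ProdIso L₁ L₂ L₃ L₄ ∧
      ¬((EllIso L₁ L₃ ∧ EllIso L₂ L₄) ∨ (EllIso L₁ L₄ ∧ EllIso L₂ L₃)) :=
  ⟨𝒪, 𝒪, 𝔭, 𝔭, isComplexLattice_zSqrtNegFive, isComplexLattice_zSqrtNegFive,
    isComplexLattice_primeOverTwo, isComplexLattice_primeOverTwo,
    prodIso_zSqrtNegFive_primeOverTwo,
    fun h => not_ellIso_zSqrtNegFive_primeOverTwo (h.elim And.left And.left)⟩
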